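/- arXiv:1505.03248 — 2 statements merged into one kernel-verified Lean document; each statement's English description precedes it below -/
import Mathlib

section
/- For any nonempty reduced word w in F_4 in the generators g_1,...,g_4, every component of the quaternion ρ(w) has the form y/2^{m} for some algebraic integer y and m ∈ N; i.e., the algebraic denominator of each component of ρ(w) is a power of 2. -/
open Quaternion

/-- The four nontrivial vertices of the regular 4-simplex as quaternions. -/
noncomputable def q : Fin 4 → ℍ[ℝ] :=
  ![⟨-1/4, Real.sqrt 5 / 4, Real.sqrt 5 / 4, Real.sqrt 5 / 4⟩,
    ⟨-1/4, -Real.sqrt 5 / 4, -Real.sqrt 5 / 4, Real.sqrt 5 / 4⟩,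
    ⟨-1/4, Real.sqrt 5 / 4, -Real.sqrt 5 / 4, -Real.sqrt 5 / 4⟩,
    ⟨-1/4, -Real.sqrt 5 / 4, Real.sqrt 5 / 4, -Real.sqrt 5 / 4⟩]

/-- The four components of a quaternion. -/
noncomputable def comp (x : ℍ[ℝ]) : Fin 4 → ℝ := ![x.re, x.imI, x.imJ, x.imK]

/-!
The reals `y / 2 ^ m` with `y` an algebraic integer form a ring, the algebraic integers with `2`
inverted. The components `-1/4` and `±√5/4` of the generators `q i` lie in it, and since
`|q i| = 1` the inverse of `q i` is its conjugate, whose components lie in it as well. Quaternions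
with components in a subring form a subring, so `ρ w`, a product of these, has its components
there too.
-/

/-- When `s` is invertible in `A`, this is the integral closure of `R[1/s]` in `A`. -/
def integralClosureAway (R : Type*) {A : Type*} [CommRing R] [CommRing A] [Algebra R A]
    (s : R) : Subalgebra R A where
  carrier := {x | ∃ m : ℕ, IsIntegral R (s ^ m • x)}
  mul_mem' := by
    rintro x y ⟨m, hx⟩ ⟨n, hy⟩
    refine ⟨m + n, ?_⟩
    rw [pow_add, ← smul_mul_smul_comm]
    exact hx.mul hy
  add_mem' := by
    rintro x y ⟨m, hx⟩ ⟨n, hy⟩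
    refine ⟨m + n, ?_⟩
    rw [smul_add, pow_add, mul_smul, mul_smul, smul_comm (s ^ m) (s ^ n) x]
    exact (hx.smul (s ^ n)).add (hy.smul (s ^ m))
  algebraMap_mem' r := ⟨0, by simpa using isIntegral_algebraMap⟩

lemma exists_isIntegral_eq_div_pow_of_mem_integralClosureAway {R K : Type*} [CommRing R]
    [Field K] [Algebra R K] {s : R} (hs : algebraMap R K s ≠ 0) {x : K}
    (hx : x ∈ integralClosureAway R s) :
    ∃ (y : K) (m : ℕ), IsIntegral R y ∧ x = y / algebraMap R K s ^ m := by
  obtain ⟨m, hm⟩ := hx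
  refine ⟨s ^ m • x, m, hm, ?_⟩
  rw [Algebra.smul_def, map_pow]
  field_simp

namespace Subring

variable {R : Type*} [CommRing R]

def quaternion (S : Subring R) : Subring ℍ[R] where
  carrier := {x | x.re ∈ S ∧ x.imI ∈ S ∧ x.imJ ∈ S ∧ x.imK ∈ S}
  one_mem' := by simp [S.one_mem, S.zero_mem]
  zero_mem' := by simp [S.zero_mem]
  add_mem' := by
    rintro x y ⟨hx₁, hx₂, hx₃, hx₄⟩ ⟨hy₁, hy₂, hy₃, hy₄⟩
    exact ⟨S.add_mem hx₁ hy₁, S.add_mem hx₂ hy₂, S.add_mem hx₃ hy₃, S.add_mem hx₄ hy₄⟩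
  neg_mem' := by
    rintro x ⟨hx₁, hx₂, hx₃, hx₄⟩
    exact ⟨S.neg_mem hx₁, S.neg_mem hx₂, S.neg_mem hx₃, S.neg_mem hx₄⟩
  mul_mem' := by
    rintro x y ⟨hx₁, hx₂, hx₃, hx₄⟩ ⟨hy₁, hy₂, hy₃, hy₄⟩
    simp only [Set.mem_ofPred_eq, re_mul, imI_mul, imJ_mul, imK_mul]
    refine ⟨?_, ?_, ?_, ?_⟩ <;> apply_rules [S.add_mem, S.sub_mem, S.mul_mem]

variable {S : Subring R} {x : ℍ[R]}

@[simp]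
lemma mem_quaternion : x ∈ S.quaternion ↔ x.re ∈ S ∧ x.imI ∈ S ∧ x.imJ ∈ S ∧ x.imK ∈ S :=
  Iff.rfl

lemma star_mem_quaternion (hx : x ∈ S.quaternion) : star x ∈ S.quaternion := by
  obtain ⟨hx₁, hx₂, hx₃, hx₄⟩ := hx
  exact ⟨by rwa [re_star], S.neg_mem hx₂, S.neg_mem hx₃, S.neg_mem hx₄⟩

end Subring

lemma comp_mem_of_mem_quaternion {x : ℍ[ℝ]} {S : Subring ℝ} (hx : x ∈ S.quaternion)
    (c : Fin 4) : comp x c ∈ S := by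
  obtain ⟨hx₁, hx₂, hx₃, hx₄⟩ := hx
  fin_cases c <;> assumption

lemma FreeGroup.map_mem_of_forall_mem {α M : Type*} [DivisionMonoid M]
    (ρ : FreeGroup α →* M) (S : Submonoid M) (hof : ∀ i, ρ (of i) ∈ S)
    (hinv : ∀ i, (ρ (of i))⁻¹ ∈ S) (w : FreeGroup α) : ρ w ∈ S := by
  induction w using FreeGroup.induction_on with
  | C1 => rw [_root_.map_one]; exact S.one_mem
  | of i => exact hof i
  | inv_of i _ => rw [_root_.map_inv]; exact hinv i
  | mul x y hx hy => rw [_root_.map_mul]; exact S.mul_mem hx hy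

lemma normSq_q (i : Fin 4) : normSq (q i) = 1 := by
  have h5 : Real.sqrt 5 ^ 2 = 5 := Real.sq_sqrt (by norm_num)
  rw [normSq_def']
  fin_cases i <;> simp [q] <;> linear_combination (3 / 16 : ℝ) * h5

lemma inv_q (i : Fin 4) : (q i)⁻¹ = star (q i) := by
  rw [inv_def, normSq_q, inv_one, one_smul]

lemma isIntegral_sqrt_five : IsIntegral ℤ (Real.sqrt 5) :=
  .of_pow two_pos <| by
    rw [Real.sq_sqrt (by norm_num)]
    exact isIntegral_natCast 5

abbrev dyadicAlgebraicIntegers : Subring ℝ := (integralClosureAway ℤ (2 : ℤ)).toSubring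

lemma q_mem_quaternion (i : Fin 4) : q i ∈ dyadicAlgebraicIntegers.quaternion := by
  have quarter : (4⁻¹ : ℝ) ∈ dyadicAlgebraicIntegers := ⟨2, by norm_num [isIntegral_one]⟩
  have sqrt_five : Real.sqrt 5 ∈ dyadicAlgebraicIntegers :=
    ⟨0, by simpa using isIntegral_sqrt_five⟩
  fin_cases i <;> refine Subring.mem_quaternion.2 ⟨?_, ?_, ?_, ?_⟩ <;>
    simp [q, div_eq_mul_inv, mul_mem sqrt_five quarter, quarter]

theorem components_denominator_pow_two_general (ρ : FreeGroup (Fin 4) →* ℍ[ℝ])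
    (hρ : ∀ i : Fin 4, ρ (FreeGroup.of i) = q i)
    (w : FreeGroup (Fin 4)) (c : Fin 4) :
    ∃ (y : ℝ) (m : ℕ), IsIntegral ℤ y ∧ comp (ρ w) c = y / 2 ^ m := by
  have hρw := FreeGroup.map_mem_of_forall_mem ρ
    dyadicAlgebraicIntegers.quaternion.toSubmonoid
    (fun i ↦ hρ i ▸ q_mem_quaternion i)
    (fun i ↦ by rw [hρ, inv_q]; exact Subring.star_mem_quaternion (q_mem_quaternion i)) w
  simpa using exists_isIntegral_eq_div_pow_of_mem_integralClosureAway (K := ℝ) two_ne_zero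
    (comp_mem_of_mem_quaternion hρw c)

/-- For every nonempty word `w` in `F₄`, each component of `ρ w` has the form
`y / 2^m` with `y` an algebraic integer: the algebraic denominator of each
component of `ρ w` is a power of 2. -/
theorem components_denominator_pow_two (ρ : FreeGroup (Fin 4) →* ℍ[ℝ])
    (hρ : ∀ i : Fin 4, ρ (FreeGroup.of i) = q i)
    (w : FreeGroup (Fin 4)) (hw : w ≠ 1) (c : Fin 4) :
    ∃ (y : ℝ) (m : ℕ), IsIntegral ℤ y ∧ comp (ρ w) c = y / 2 ^ m :=
  components_denominator_pow_two_general ρ hρ w c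
end

section
/- Let k ∈ {1,2,3}, π_k the corresponding permutation of {1,2,3,4} induced by conjugation by the quaternion unit i_k, and w ∈ F_4. If u ∈ F_4 satisfies red_k(w) = u w π_k(u)^{-1}, then the k-th imaginary component of ρ(w) equals the k-th imaginary component of ρ(red_k(w)); in particular, if red_k(w) = 1 then the k-th component of ρ(w) is 0. -/
open Quaternion

/-- The permutations `π₁ = (1,3)(2,4)`, `π₂ = (1,4)(2,3)`, `π₃ = (1,2)(3,4)` of
the simplex vertices (0-based indices), induced by conjugation by the
quaternion units `i, j, k`. -/
def π : Fin 3 → Fin 4 → Fin 4 := ![![2, 3, 0, 1], ![3, 2, 1, 0], ![1, 0, 3, 2]]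

/-- The three imaginary components of a quaternion. -/
noncomputable def imComp (x : ℍ[ℝ]) : Fin 3 → ℝ := ![x.imI, x.imJ, x.imK]

/-!
Write `E = i_k`. Conjugation by `E` permutes the `q_i` by `π_k`, so `E ρ(u) = ρ(π_k u) E` for
every `u`, and with `b = ρ(π_k u)` we get `E ρ(r) = E ρ(u) ρ(w) b⁻¹ = b (E ρ(w)) b⁻¹`. The `k`-th
imaginary component of `x` is `-re (E x)`, and the real part is invariant under conjugation.
-/

theorem FreeGroup.semiconjBy_map {α M₀ : Type*} [GroupWithZero M₀] (f : FreeGroup α →* M₀)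
    (σ : α → α) (c : M₀) (h : ∀ i, SemiconjBy c (f (of i)) (f (of (σ i)))) (u : FreeGroup α) :
    SemiconjBy c (f u) (f (map σ u)) := by
  induction u using FreeGroup.induction_on with
  | C1 => simp
  | of i => simpa using h i
  | inv_of i hi => rw [_root_.map_inv, _root_.map_inv, _root_.map_inv]; exact hi.inv_right₀
  | mul x y hx hy => rw [_root_.map_mul, _root_.map_mul, _root_.map_mul]; exact hx.mul_right hy

namespace Quaternion

theorem re_mul_comm {R : Type*} [CommRing R] (a b : ℍ[R]) : (a * b).re = (b * a).re := by
  simp only [re_mul]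
  ring

theorem re_mul_mul_inv {K : Type*} [Field K] [LinearOrder K] [IsStrictOrderedRing K] {b : ℍ[K]}
    (hb : b ≠ 0) (x : ℍ[K]) : (b * x * b⁻¹).re = x.re := calc
  (b * x * b⁻¹).re = (b⁻¹ * (b * x)).re := re_mul_comm _ _
  _ = x.re := by rw [inv_mul_cancel_left₀ hb]

end Quaternion

noncomputable def unitImag : Fin 3 → ℍ[ℝ] := ![⟨0, 1, 0, 0⟩, ⟨0, 0, 1, 0⟩, ⟨0, 0, 0, 1⟩]

theorem imComp_eq_neg_re_unitImag_mul (k : Fin 3) (x : ℍ[ℝ]) :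
    imComp x k = -(unitImag k * x).re := by
  fin_cases k <;> simp only [Quaternion.re_mul] <;> simp [unitImag, imComp]

theorem semiconjBy_unitImag_q (k : Fin 3) (n : Fin 4) :
    SemiconjBy (unitImag k) (q n) (q (π k n)) := by
  fin_cases k <;> fin_cases n <;> ext <;>
    simp only [Quaternion.re_mul, Quaternion.imI_mul, Quaternion.imJ_mul, Quaternion.imK_mul] <;>
    simp [unitImag, q, π] <;> ring

/-- For `k ∈ {1,2,3}`: if `r = u * w * (π_k u)⁻¹` is a `π_k`-conjugate of `w`
(e.g. `r = red_k w`), then the `k`-th imaginary component of `ρ w` equals that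
of `ρ r`; in particular if `r = 1`, the `k`-th component of `ρ w` is `0`. -/
theorem imComp_invariant_under_pi_conjugation
    (ρ : FreeGroup (Fin 4) →* ℍ[ℝ]) (hρ : ∀ i : Fin 4, ρ (FreeGroup.of i) = q i)
    (k : Fin 3) (u w r : FreeGroup (Fin 4))
    (hr : r = u * w * (FreeGroup.map (π k) u)⁻¹) :
    imComp (ρ w) k = imComp (ρ r) k ∧ (r = 1 → imComp (ρ w) k = 0) := by
  set b := ρ (FreeGroup.map (π k) u)
  have hb : b ≠ 0 := (ρ.toHomUnits _).ne_zero
  have hsemiconj : unitImag k * ρ u = b * unitImag k :=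
    FreeGroup.semiconjBy_map ρ (π k) (unitImag k)
      (fun i => by simpa only [hρ] using semiconjBy_unitImag_q k i) u
  have hconj : unitImag k * ρ r = b * (unitImag k * ρ w) * b⁻¹ := by
    rw [hr, map_mul, map_mul, map_inv, ← mul_assoc, ← mul_assoc, hsemiconj, mul_assoc b]
  have hcomp : imComp (ρ w) k = imComp (ρ r) k := by
    rw [imComp_eq_neg_re_unitImag_mul, imComp_eq_neg_re_unitImag_mul, hconj,
      Quaternion.re_mul_mul_inv hb]
  refine ⟨hcomp, fun hr1 => ?_⟩
  rw [hcomp, hr1, map_one]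
  fin_cases k <;> simp [imComp]
end
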